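/- arXiv:2110.02188 — 2 statements merged into one kernel-verified Lean document; each statement's English description precedes it below -/
import Mathlib

section
/- Let u, v ≥ 2 be integers with uv ≠ 4, and define f_{u,v} on admissible finite integer sequences recursively by: f_{u,v}(⟦q₀⟧) = ⟦q₀⟧; if v ∤ q₀ and q₁ = 1, f_{u,v}(⟦q₀,...,q_r⟧) = ⟦q₀+1⟧ ⊕ (−f_{v,u}(⟦q₂+1,q₃,...,q_r⟧)); if v ∤ q₀, q₁ = 2, r > 1, f_{u,v}(⟦q₀,...,q_r⟧) = ⟦q₀+1⟧ ⊕ f_{v,u}(⟦−2,q₂+1,q₃,...,q_r⟧); if v ∤ q₀, q₁ = 2, r = 1, f_{u,v}(⟦q₀,2⟧) = ⟦q₀+1,−2⟧; otherwise f_{u,v}(⟦q₀,...,q_r⟧) = ⟦q₀⟧ ⊕ f_{v,u}(⟦q₁,...,q_r⟧). Then f_{u,v} preserves the evaluation: E(f_{u,v}(s)) = E(s) for every s in its domain A₁. -/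
/-- Evaluation of a finite continued fraction `[q₀, q₁, …, q_r]`. -/
def E : List ℤ → ℚ
  | [] => 0
  | [q] => (q : ℚ)
  | q :: l => (q : ℚ) + 1 / E l

/-- Concatenation `⊕` of finite sequences, merging when the second begins with `0`. -/
def oplus (a b : List ℤ) : List ℤ :=
  match b with
  | [] => a
  | p :: ps =>
    if p = 0 then
      match ps with
      | [] => a
      | p1 :: ps' => a.dropLast ++ (a.getLast! + p1) :: ps'
    else a ++ (p :: ps)

/-- No tail continued fraction `[q_i, …, q_r]` (for `0 < i < r`) evaluates to `0`. -/
def TailsNonzero (l : List ℤ) : Prop :=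
  ∀ i, 0 < i → i + 1 < l.length → E (l.drop i) ≠ 0

/-- `[q₀, …, q_r]` is a short continued fraction: `q_i ≥ 1` for `0 < i < r`, `q_r > 1` if `r > 0`. -/
def IsShortCF (l : List ℤ) : Prop :=
  l ≠ [] ∧ (∀ i, 0 < i → i + 1 < l.length → 1 ≤ l.getD i 0) ∧
    (1 < l.length → 1 < l.getD (l.length - 1) 0)

/-- Membership in `A₁`. -/
def memA1 (l : List ℤ) : Prop := IsShortCF l ∧ TailsNonzero l

/-- Membership in `A₂`: all entries after the first have absolute value `> 1`. -/
def memA2 (l : List ℤ) : Prop :=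
  l ≠ [] ∧ (∀ i, 0 < i → i < l.length → 1 < |l.getD i 0|) ∧ TailsNonzero l

/-- The `(u,v)`-divisibility property: `v` divides even-indexed entries, `u` odd-indexed ones. -/
def DivProp (u v : ℤ) (l : List ℤ) : Prop :=
  ∀ i, i < l.length → (if i % 2 = 0 then v else u) ∣ l.getD i 0

/-- The function `f_{u,v} : A₁ → A₂`. -/
def fCF (u v : ℤ) : List ℤ → List ℤ
  | [] => []
  | [q0] => [q0]
  | q0 :: q1 :: rest =>
    if ¬ (v ∣ q0) ∧ q1 = 1 then
      match rest with
      | [] => [q0 + 1]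
      | q2 :: rest' => oplus [q0 + 1] ((fCF v u ((q2 + 1) :: rest')).map (fun x => -x))
    else if ¬ (v ∣ q0) ∧ q1 = 2 then
      match rest with
      | [] => [q0 + 1, -2]
      | q2 :: rest' => oplus [q0 + 1] (fCF v u (-2 :: (q2 + 1) :: rest'))
    else oplus [q0] (fCF v u (q1 :: rest))
termination_by l => l.length
decreasing_by all_goals (simp_all [List.length]; try omega)

/-- The function `g_{u,v} : A₂ → A₁`. -/
def gCF (u v : ℤ) : List ℤ → List ℤ
  | [] => []
  | [q0] => [q0]
  | q0 :: q1 :: rest =>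
    if (q1 < 0 ∧ u ≠ 2) ∨ (q1 < -2 ∧ u = 2) then
      oplus [q0 - 1, 1] ((gCF v u (((q1 + 1) :: rest).map (fun x => -x))))
    else if q1 = -2 ∧ u = 2 then
      match rest with
      | [] => [q0 - 1, 2]
      | q2 :: rest' => oplus [q0 - 1, 2] (gCF v u ((q2 - 1) :: rest'))
    else oplus [q0] (gCF v u (q1 :: rest))
termination_by l => l.length
decreasing_by all_goals (simp_all [List.length]; try omega)

/-!
Since `E [] = 0` and `1 / 0 = 0` in `ℚ`, the recursion `E (q :: l) = q + 1 / E l` holds for every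
list, and the merging rule of `⊕` is exactly the identity `[…, a, 0, b, …] = […, a + b, …]`; hence
`E (⟦a⟧ ⊕ s) = a + 1 / E s` for every `s`. The theorem is then proved along the recursion of
`f_{u,v}`: each branch rewrites `[q₀, 1, x]` as `[q₀ + 1, -(x + 1)]` or `[q₀, 2, x]` as
`[q₀ + 1, -2, x + 1]`, where `x ≥ 1` is the value of the remaining tail.
-/

lemma E_cons (q : ℤ) (l : List ℤ) : E (q :: l) = q + 1 / E l := by
  cases l with
  | nil => simp [E]
  | cons p l => exact E.eq_3 q _ (List.cons_ne_nil p l)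

lemma E_map_neg (l : List ℤ) : E (l.map fun x => -x) = -E l := by
  induction l with
  | nil => simp [E]
  | cons q l ih =>
    rw [List.map_cons, E_cons, E_cons, ih, div_neg]
    push_cast
    ring

lemma E_add_one_cons (q : ℤ) (l : List ℤ) : E ((q + 1) :: l) = E (q :: l) + 1 := by
  rw [E_cons, E_cons]
  push_cast
  ring

lemma E_oplus_singleton (a : ℤ) (l : List ℤ) : E (oplus [a] l) = a + 1 / E l := by
  rcases l with _ | ⟨p, l⟩
  · simp [oplus, E]
  by_cases hp : p = 0
  · subst hp
    rcases l with _ | ⟨p₁, l⟩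
    · simp [oplus, E]
    · rw [E_cons 0, E_cons p₁]
      simp [oplus, List.getLast!_eq_getLast?_getD, E_cons, add_assoc]
  · simp only [oplus, hp, if_false, List.singleton_append, E_cons]

lemma E_nonneg {l : List ℤ} (hl : ∀ q ∈ l, 0 ≤ q) : 0 ≤ E l := by
  induction l with
  | nil => simp [E]
  | cons q l ih =>
    simp only [List.mem_cons, forall_eq_or_imp] at hl
    rw [E_cons]
    have := ih hl.2
    have : (0 : ℚ) ≤ q := by exact_mod_cast hl.1
    positivity

lemma one_le_E_cons {q : ℤ} {l : List ℤ} (hq : 1 ≤ q) (hl : ∀ p ∈ l, 1 ≤ p) :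
    1 ≤ E (q :: l) := by
  have hE : 0 ≤ 1 / E l := one_div_nonneg.mpr (E_nonneg fun p hp => by linarith [hl p hp])
  rw [E_cons]
  have : (1 : ℚ) ≤ q := by exact_mod_cast hq
  linarith

lemma one_div_one_add_one_div {x : ℚ} (hx : 1 ≤ x) : 1 / (1 + 1 / x) = 1 + 1 / -(x + 1) := by
  have : x + 1 ≠ 0 := by linarith
  field_simp
  ring

lemma one_div_two_add_one_div {x : ℚ} (hx : 1 ≤ x) :
    1 / (2 + 1 / x) = 1 + 1 / (-2 + 1 / (x + 1)) := by
  have : x + 1 ≠ 0 := by linarith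
  have : 2 * x + 1 ≠ 0 := by linarith
  have h : -2 + 1 / (x + 1) = -(2 * x + 1) / (x + 1) := by
    field_simp
    ring
  rw [h]
  field_simp
  ring

theorem E_fCF_of_one_le_tail (u v : ℤ) (l : List ℤ) (hl : ∀ q ∈ l.tail, 1 ≤ q) :
    E (fCF u v l) = E l := by
  induction u, v, l using fCF.induct with
  | case1 | case2 => simp [fCF]
  | case3 u v q0 q1 h =>
    obtain ⟨hq0, rfl⟩ := h
    simp [fCF, hq0, E_cons, E]
  | case4 u v q0 q1 h p ps ih =>
    obtain ⟨hq0, rfl⟩ := h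
    simp only [List.tail_cons, List.mem_cons, forall_eq_or_imp] at hl ih
    have hx := one_le_E_cons hl.2.1 hl.2.2
    rw [fCF.eq_4, if_pos ⟨hq0, rfl⟩, E_oplus_singleton, E_map_neg,
      ih hl.2.2, E_add_one_cons, E_cons q0, E_cons 1]
    push_cast
    rw [one_div_one_add_one_div hx]
    ring
  | case5 u v q0 q1 _ h =>
    obtain ⟨hq0, rfl⟩ := h
    rw [show fCF u v [q0, 2] = [q0 + 1, -2] by simp [fCF, hq0], E_cons, E_cons q0]
    simp only [E]
    push_cast
    ring
  | case6 u v q0 q1 h₁ h₂ p ps ih =>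
    obtain ⟨hq0, rfl⟩ := h₂
    simp only [List.tail_cons, List.mem_cons, forall_eq_or_imp] at hl ih
    have hx := one_le_E_cons hl.2.1 hl.2.2
    rw [fCF.eq_4, if_neg h₁, if_pos ⟨hq0, rfl⟩, E_oplus_singleton, ih ⟨by omega, hl.2.2⟩,
      E_cons (-2), E_add_one_cons, E_cons q0, E_cons 2]
    push_cast
    rw [one_div_two_add_one_div hx]
    ring
  | case7 u v q0 q1 rest h₁ h₂ ih =>
    simp only [List.tail_cons, List.mem_cons, forall_eq_or_imp] at hl ih
    rw [fCF.eq_def]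
    dsimp only
    rw [if_neg h₁, if_neg h₂, E_oplus_singleton, ih hl.2, E_cons q0]

lemma IsShortCF.one_le_of_mem_tail {l : List ℤ} (hl : IsShortCF l) : ∀ q ∈ l.tail, 1 ≤ q := by
  intro q hq
  obtain ⟨i, hi, rfl⟩ := List.getElem_of_mem hq
  obtain ⟨-, hmid, hlast⟩ := hl
  rw [List.length_tail] at hi
  have hget : l.tail[i] = l.getD (i + 1) 0 := by
    rw [List.getElem_tail, List.getD_eq_getElem]
  rw [hget]
  rcases (show i + 2 ≤ l.length by omega).lt_or_eq with hlt | heq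
  · exact hmid (i + 1) (by omega) hlt
  · have := hlast (by omega)
    rw [show l.length - 1 = i + 1 by omega] at this
    omega

theorem E_fCF_general (u v : ℤ) (l : List ℤ) (hl : memA1 l) :
    E (fCF u v l) = E l :=
  E_fCF_of_one_le_tail u v l hl.1.one_le_of_mem_tail

/-- For `u, v ≥ 2` with `uv ≠ 4`, the function `f_{u,v}` preserves the evaluation
of every sequence in `A₁`. -/
theorem E_fCF (u v : ℤ) (hu : 2 ≤ u) (hv : 2 ≤ v) (huv : u * v ≠ 4)
    (l : List ℤ) (hl : memA1 l) :
    E (fCF u v l) = E l :=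
  E_fCF_general u v l hl
end

section
/- (Sanov) The group generated by L₂ = [[1,0],[2,1]] and R₂ = [[1,2],[0,1]] is exactly the set of matrices [[1+4n₁, 2n₂],[2n₃, 1+4n₄]] in SL₂(ℤ) with n₁, n₂, n₃, n₄ ∈ ℤ. -/
/-!
`𝒢_{u,v}` is closed under products and inverses and contains `L_u` and `R_v`, so it contains
`G_{u,v}`. Conversely, let `M ∈ 𝒢_{2,2}` have top row `(a, b)`. Right multiplication by `R₂ᵏ`
replaces `b` by `b + 2ka`, and by `L₂ᵏ` replaces `a` by `a + 2kb`; since `a` is odd and `b` even,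
`|a| ≠ |b|`, and a suitable `k` brings the larger of the two below the smaller, so `|a| + |b|`
strictly decreases. The descent stops at `b = 0`, where `ad = 1` and `a ≡ 1 (mod 4)` force
`a = d = 1`, so that `M = L₂ⁿ` with `2n = c`.
-/

abbrev SL2 := Matrix.SpecialLinearGroup (Fin 2) ℤ

/-- `L_u = [[1,0],[u,1]]`. -/
def Lmat (u : ℤ) : SL2 :=
  ⟨!![1, 0; u, 1], by simp [Matrix.det_fin_two_of]⟩

/-- `R_v = [[1,v],[0,1]]`. -/
def Rmat (v : ℤ) : SL2 :=
  ⟨!![1, v; 0, 1], by simp [Matrix.det_fin_two_of]⟩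

/-- The set `𝒢_{u,v}`. -/
def Gscr (u v : ℤ) : Set SL2 :=
  {M | ∃ n1 n2 n3 n4 : ℤ,
    (M : Matrix (Fin 2) (Fin 2) ℤ) = !![1 + u*v*n1, v*n2; u*n3, 1 + u*v*n4]}

/-- The group `G_{u,v}` generated by `L_u` and `R_v`. -/
def Guv (u v : ℤ) : Subgroup SL2 := Subgroup.closure {Lmat u, Rmat v}

/-- Alternating product `R^{a₀} L^{a₁} R^{a₂} ⋯` from a list of exponents
(the boolean records whether the next factor is a power of `R`). -/
def altProd (u v : ℤ) : Bool → List ℤ → SL2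
  | _, [] => 1
  | true, a :: l => (Rmat v) ^ a * altProd u v false l
  | false, a :: l => (Lmat u) ^ a * altProd u v true l

open Matrix.SpecialLinearGroup

lemma coe_Lmat (u : ℤ) : (Lmat u : Matrix (Fin 2) (Fin 2) ℤ) = !![1, 0; u, 1] := rfl

lemma coe_Rmat (v : ℤ) : (Rmat v : Matrix (Fin 2) (Fin 2) ℤ) = !![1, v; 0, 1] := rfl

lemma Lmat_zero : Lmat 0 = 1 := by
  ext i j; fin_cases i <;> fin_cases j <;> rfl

lemma Rmat_zero : Rmat 0 = 1 := by
  ext i j; fin_cases i <;> fin_cases j <;> rfl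

lemma Lmat_add (u w : ℤ) : Lmat (u + w) = Lmat u * Lmat w := by
  ext : 1
  rw [coe_mul, coe_Lmat, coe_Lmat, coe_Lmat, Matrix.mul_fin_two]
  simp [add_comm]

lemma Rmat_add (u w : ℤ) : Rmat (u + w) = Rmat u * Rmat w := by
  ext : 1
  rw [coe_mul, coe_Rmat, coe_Rmat, coe_Rmat, Matrix.mul_fin_two]
  simp [add_comm]

lemma Lmat_zpow (u n : ℤ) : Lmat u ^ n = Lmat (u * n) := by
  induction n using Int.induction_on with
  | zero => simp [Lmat_zero]
  | succ k ih => rw [zpow_add_one, ih, ← Lmat_add]; ring_nf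
  | pred k ih => rw [zpow_sub_one, ih, mul_inv_eq_iff_eq_mul, ← Lmat_add]; ring_nf

lemma Rmat_zpow (v n : ℤ) : Rmat v ^ n = Rmat (v * n) := by
  induction n using Int.induction_on with
  | zero => simp [Rmat_zero]
  | succ k ih => rw [zpow_add_one, ih, ← Rmat_add]; ring_nf
  | pred k ih => rw [zpow_sub_one, ih, mul_inv_eq_iff_eq_mul, ← Rmat_add]; ring_nf

lemma mul_Lmat_apply_zero_zero (M : SL2) (u : ℤ) : (M * Lmat u) 0 0 = M 0 0 + M 0 1 * u := by
  simp [coe_Lmat, Matrix.mul_apply, Fin.sum_univ_two]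

lemma mul_Lmat_apply_zero_one (M : SL2) (u : ℤ) : (M * Lmat u) 0 1 = M 0 1 := by
  simp [coe_Lmat, Matrix.mul_apply, Fin.sum_univ_two]

lemma mul_Rmat_apply_zero_zero (M : SL2) (v : ℤ) : (M * Rmat v) 0 0 = M 0 0 := by
  simp [coe_Rmat, Matrix.mul_apply, Fin.sum_univ_two]

lemma mul_Rmat_apply_zero_one (M : SL2) (v : ℤ) : (M * Rmat v) 0 1 = M 0 1 + M 0 0 * v := by
  simp [coe_Rmat, Matrix.mul_apply, Fin.sum_univ_two, add_comm]

lemma SL2_det_fin_two (M : SL2) : M 0 0 * M 1 1 - M 0 1 * M 1 0 = 1 := by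
  have h := M.det_coe
  rwa [Matrix.det_fin_two] at h

lemma eq_Lmat_of_apply_zero_zero_of_apply_zero_one {M : SL2} (h00 : M 0 0 = 1) (h01 : M 0 1 = 0) :
    M = Lmat (M 1 0) := by
  have h11 : M 1 1 = 1 := by simpa [h00, h01] using SL2_det_fin_two M
  ext i j; fin_cases i <;> fin_cases j <;> simp [coe_Lmat, h00, h01, h11]

def GscrSubgroup (u v : ℤ) : Subgroup SL2 where
  carrier := Gscr u v
  one_mem' := ⟨0, 0, 0, 0, by ext i j; fin_cases i <;> fin_cases j <;> simp⟩
  mul_mem' := by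
    rintro A B ⟨a1, a2, a3, a4, hA⟩ ⟨b1, b2, b3, b4, hB⟩
    refine ⟨a1 + b1 + u*v*a1*b1 + a2*b3, b2 + u*v*a1*b2 + a2 + u*v*a2*b4,
      a3 + u*v*a3*b1 + b3 + u*v*a4*b3, a3*b2 + a4 + b4 + u*v*a4*b4, ?_⟩
    rw [coe_mul, hA, hB, Matrix.mul_fin_two]
    ext i j; fin_cases i <;> fin_cases j <;> simp <;> ring
  inv_mem' := by
    rintro A ⟨a1, a2, a3, a4, hA⟩
    refine ⟨a4, -a2, -a3, a1, ?_⟩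
    rw [coe_inv, hA, Matrix.adjugate_fin_two_of]
    simp

lemma Lmat_mem_Guv (u v : ℤ) : Lmat u ∈ Guv u v :=
  Subgroup.subset_closure (Set.mem_insert _ _)

lemma Rmat_mem_Guv (u v : ℤ) : Rmat v ∈ Guv u v :=
  Subgroup.subset_closure (Set.mem_insert_of_mem _ rfl)

lemma Guv_le_GscrSubgroup (u v : ℤ) : Guv u v ≤ GscrSubgroup u v := by
  rw [Guv, Subgroup.closure_le]
  rintro M (rfl | rfl)
  · exact ⟨0, 0, 1, 0, by simp [coe_Lmat]⟩
  · exact ⟨0, 1, 0, 0, by simp [coe_Rmat]⟩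

lemma dvd_apply_of_mem_Gscr {u v : ℤ} {M : SL2} (hM : M ∈ Gscr u v) :
    u * v ∣ M 0 0 - 1 ∧ v ∣ M 0 1 ∧ u ∣ M 1 0 ∧ u * v ∣ M 1 1 - 1 := by
  obtain ⟨n1, n2, n3, n4, hM⟩ := hM
  simp [hM]

lemma Int.exists_two_mul_natAbs_add_mul_le (b : ℤ) {m : ℤ} (hm : m ≠ 0) :
    ∃ k, 2 * (b + m * k).natAbs ≤ m.natAbs := by
  have hpos : 0 < m.natAbs := Int.natAbs_pos.2 hm
  obtain ⟨k, hk⟩ : m ∣ b.bmod m.natAbs - b :=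
    Int.natAbs_dvd.1 (Int.ModEq.dvd Int.bmod_emod.symm)
  have h1 := Int.le_bmod (x := b) hpos
  have h2 := Int.bmod_lt (x := b) hpos
  exact ⟨k, by omega⟩

lemma exists_mem_Guv_natAbs_lt {M : SL2} (hM : M ∈ Gscr 2 2) (h01 : M 0 1 ≠ 0) :
    ∃ X ∈ Guv 2 2, ((M * X) 0 0).natAbs + ((M * X) 0 1).natAbs <
      (M 0 0).natAbs + (M 0 1).natAbs := by
  obtain ⟨ha, hb, -⟩ := dvd_apply_of_mem_Gscr hM
  have hne : (M 0 0).natAbs ≠ (M 0 1).natAbs := by omega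
  rcases hne.lt_or_gt with hlt | hgt
  · obtain ⟨k, hk⟩ := Int.exists_two_mul_natAbs_add_mul_le (M 0 1) (m := M 0 0 * 2) (by omega)
    refine ⟨Rmat 2 ^ k, zpow_mem (Rmat_mem_Guv 2 2) k, ?_⟩
    rw [Rmat_zpow, mul_Rmat_apply_zero_zero, mul_Rmat_apply_zero_one, ← mul_assoc]
    omega
  · obtain ⟨k, hk⟩ := Int.exists_two_mul_natAbs_add_mul_le (M 0 0) (m := M 0 1 * 2) (by omega)
    refine ⟨Lmat 2 ^ k, zpow_mem (Lmat_mem_Guv 2 2) k, ?_⟩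
    rw [Lmat_zpow, mul_Lmat_apply_zero_zero, mul_Lmat_apply_zero_one, ← mul_assoc]
    omega

lemma apply_zero_zero_eq_one_of_mem_Gscr {M : SL2} (hM : M ∈ Gscr 2 2) (h01 : M 0 1 = 0) :
    M 0 0 = 1 := by
  have hdet : M 0 0 * M 1 1 = 1 := by simpa [h01] using SL2_det_fin_two M
  have h00 := (dvd_apply_of_mem_Gscr hM).1
  rcases Int.eq_one_or_neg_one_of_mul_eq_one hdet with h | h <;> omega

theorem mem_Guv_of_mem_Gscr {M : SL2} (hM : M ∈ Gscr 2 2) : M ∈ Guv 2 2 := by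
  induction hN : (M 0 0).natAbs + (M 0 1).natAbs using Nat.strong_induction_on
    generalizing M with
  | _ N ih =>
  by_cases h01 : M 0 1 = 0
  · have h00 := apply_zero_zero_eq_one_of_mem_Gscr hM h01
    obtain ⟨n, hn⟩ := (dvd_apply_of_mem_Gscr hM).2.2.1
    rw [eq_Lmat_of_apply_zero_zero_of_apply_zero_one h00 h01, hn, ← Lmat_zpow]
    exact zpow_mem (Lmat_mem_Guv 2 2) n
  · obtain ⟨X, hX, hlt⟩ := exists_mem_Guv_natAbs_lt hM h01
    have hMX : M * X ∈ Gscr 2 2 := (GscrSubgroup 2 2).mul_mem hM (Guv_le_GscrSubgroup 2 2 hX)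
    exact (Subgroup.mul_mem_cancel_right _ hX).1 (ih _ (hN ▸ hlt) hMX rfl)

/-- (Sanov) The group generated by `L₂` and `R₂` is exactly `𝒢_{2,2}`. -/
theorem sanov (M : SL2) : M ∈ Guv 2 2 ↔ M ∈ Gscr 2 2 :=
  ⟨fun h => Guv_le_GscrSubgroup 2 2 h, mem_Guv_of_mem_Gscr⟩
end
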